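/- arXiv:1502.05679 — 4 statements merged into one kernel-verified Lean document; each statement's English description precedes it below -/
import Mathlib

section
/- Let P₄(X) = X + X² + (4/5)X³ + (2/5)X⁴. For real numbers a, b, t with 0 < a ≤ b, one has Re{P₄(a/(b+it))} = (16/5)·(ab)⁴/(b²+t²)⁴ + a(b−a)·Q(a,b,t)/(5(b²+t²)³), where Q(a,b,t) = 5t⁴ + 2(5b² + 5ab − a²)t² + b²(5b² + 10ab + 14a²). -/
/-!
Since `a / (b + it) = a (b - it) / (b² + t²)`, the real part of its `n`-th power is
`aⁿ Re((b + it)ⁿ) / (b² + t²)ⁿ`. Expanding `Re((b + it)ⁿ)` for `n ≤ 4` turns the claim into an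
identity between rational functions of `a, b, t` with denominators powers of `b² + t²`.
-/

open Complex

theorem re_ofReal_div_pow (a : ℝ) (w : ℂ) (n : ℕ) :
    (((a : ℂ) / w) ^ n).re = a ^ n * (w ^ n).re / normSq w ^ n := by
  rw [div_pow, ← ofReal_pow, div_re, ofReal_re, ofReal_im, zero_mul, zero_div, add_zero, map_pow]

theorem re_add_mul_I_sq (b t : ℝ) : ((b + t * I) ^ 2).re = b ^ 2 - t ^ 2 := by
  simp [sq]

theorem re_add_mul_I_pow_three (b t : ℝ) : ((b + t * I) ^ 3).re = b ^ 3 - 3 * b * t ^ 2 := by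
  simp [pow_succ]
  ring

theorem re_add_mul_I_pow_four (b t : ℝ) :
    ((b + t * I) ^ 4).re = b ^ 4 - 6 * b ^ 2 * t ^ 2 + t ^ 4 := by
  simp [pow_succ]
  ring

theorem reP4_identity_general (a b t : ℝ) :
    (((a : ℂ) / (b + t * I)) + ((a : ℂ) / (b + t * I)) ^ 2
        + (4 / 5) * ((a : ℂ) / (b + t * I)) ^ 3
        + (2 / 5) * ((a : ℂ) / (b + t * I)) ^ 4).re
      = (16 / 5) * (a * b) ^ 4 / (b ^ 2 + t ^ 2) ^ 4
        + a * (b - a)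
            * (5 * t ^ 4 + 2 * (5 * b ^ 2 + 5 * a * b - a ^ 2) * t ^ 2
                + b ^ 2 * (5 * b ^ 2 + 10 * a * b + 14 * a ^ 2))
            / (5 * (b ^ 2 + t ^ 2) ^ 3) := by
  have re_pow (n : ℕ) : (((a : ℂ) / (b + t * I)) ^ n).re
      = a ^ n * ((b + t * I) ^ n).re / (b ^ 2 + t ^ 2) ^ n := by
    rw [re_ofReal_div_pow, normSq_add_mul_I]
  have re_one := re_pow 1
  simp only [pow_one] at re_one
  rw [show (4 / 5 : ℂ) = ((4 / 5 : ℝ) : ℂ) by norm_num,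
    show (2 / 5 : ℂ) = ((2 / 5 : ℝ) : ℂ) by norm_num]
  simp only [add_re, re_ofReal_mul]
  rw [re_one, re_pow, re_pow, re_pow, re_add_mul_I_sq, re_add_mul_I_pow_three,
    re_add_mul_I_pow_four]
  simp only [add_re, ofReal_re, re_ofReal_mul, I_re, mul_zero, add_zero]
  rcases eq_or_ne (b ^ 2 + t ^ 2) 0 with hd | hd
  · -- both sides vanish, because `x / 0 = 0`
    obtain ⟨rfl, rfl⟩ : b = 0 ∧ t = 0 := by constructor <;> nlinarith [sq_nonneg b, sq_nonneg t]
    simp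
  · field_simp
    ring

/-- Real-part identity for P₄(a/(b+it)) when 0 < a ≤ b. -/
theorem reP4_identity (a b t : ℝ) (ha : 0 < a) (hab : a ≤ b) :
    (((a : ℂ) / (b + t * I)) + ((a : ℂ) / (b + t * I)) ^ 2
        + (4 / 5) * ((a : ℂ) / (b + t * I)) ^ 3
        + (2 / 5) * ((a : ℂ) / (b + t * I)) ^ 4).re
      = (16 / 5) * (a * b) ^ 4 / (b ^ 2 + t ^ 2) ^ 4
        + a * (b - a)
            * (5 * t ^ 4 + 2 * (5 * b ^ 2 + 5 * a * b - a ^ 2) * t ^ 2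
                + b ^ 2 * (5 * b ^ 2 + 10 * a * b + 14 * a ^ 2))
            / (5 * (b ^ 2 + t ^ 2) ^ 3) :=
  reP4_identity_general a b t
end

section
/- Let P₄(X) = X + X² + (4/5)X³ + (2/5)X⁴ and let Q(a,b,t) = 5t⁴ + 2(5b² + 5ab − a²)t² + b²(5b² + 10ab + 14a²). For all real a, b, t with 0 < a ≤ b, Q(a,b,t) > 0, and consequently Re{P₄(a/(b+it))} ≥ (16/5)·(ab)⁴/(b²+t²)⁴. -/
/-!
Writing `w = a / (b + i t) = (a b - i a t) / (b² + t²)` and expanding the powers of `w`, the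
difference `Re P₄(w) - (16/5) (Re w)⁴` collapses to `a (b - a) Q(a, b, t) / (5 (b² + t²)³)`.
For `0 < a ≤ b` the factor `b - a` is nonnegative and `Q` is an even quartic in `t` with
positive coefficients.
-/

open Complex

noncomputable def P4 (z : ℂ) : ℂ := z + z ^ 2 + 4 / 5 * z ^ 3 + 2 / 5 * z ^ 4

noncomputable def Q (a b t : ℝ) : ℝ :=
  5 * t ^ 4 + 2 * (5 * b ^ 2 + 5 * a * b - a ^ 2) * t ^ 2
    + b ^ 2 * (5 * b ^ 2 + 10 * a * b + 14 * a ^ 2)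

theorem P4_re (z : ℂ) :
    (P4 z).re = z.re + (z.re ^ 2 - z.im ^ 2) + 4 / 5 * (z.re ^ 3 - 3 * z.re * z.im ^ 2)
      + 2 / 5 * (z.re ^ 4 - 6 * z.re ^ 2 * z.im ^ 2 + z.im ^ 4) := by
  simp only [P4, pow_succ, pow_zero, one_mul, add_re, mul_re, mul_im, div_ofNat_re,
    div_ofNat_im, re_ofNat, im_ofNat]
  ring

theorem ofReal_div_add_mul_I_re (a b t : ℝ) :
    ((a : ℂ) / (b + t * I)).re = a * b / (b ^ 2 + t ^ 2) := by
  simp [div_re, normSq_apply, pow_two]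

theorem ofReal_div_add_mul_I_im (a b t : ℝ) :
    ((a : ℂ) / (b + t * I)).im = -(a * t) / (b ^ 2 + t ^ 2) := by
  simp [div_im, normSq_apply, pow_two, neg_div]

theorem P4_re_sub_eq (a b t : ℝ) (hd : b ^ 2 + t ^ 2 ≠ 0) :
    (P4 (a / (b + t * I))).re - 16 / 5 * (a * b) ^ 4 / (b ^ 2 + t ^ 2) ^ 4
      = a * (b - a) * Q a b t / (5 * (b ^ 2 + t ^ 2) ^ 3) := by
  rw [P4_re, ofReal_div_add_mul_I_re, ofReal_div_add_mul_I_im, Q]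
  field_simp
  ring

theorem even_quartic_pos {p q r : ℝ} (hp : 0 < p) (hq : 0 ≤ q) (hr : 0 < r) (t : ℝ) :
    0 < p * t ^ 4 + q * t ^ 2 + r := by
  positivity

theorem Q_pos {a b : ℝ} (ha : 0 < a) (hab : a ≤ b) (t : ℝ) : 0 < Q a b t := by
  have hb : 0 < b := ha.trans_le hab
  refine even_quartic_pos (by norm_num) ?_ (by positivity) t
  nlinarith [mul_le_mul_of_nonneg_left hab ha.le]

/-- For 0 < a ≤ b, Q(a,b,t) > 0 and Re P₄(a/(b+it)) ≥ (16/5)(ab)⁴/(b²+t²)⁴. -/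
theorem reP4_lower_bound (a b t : ℝ) (ha : 0 < a) (hab : a ≤ b) :
    0 < 5 * t ^ 4 + 2 * (5 * b ^ 2 + 5 * a * b - a ^ 2) * t ^ 2
        + b ^ 2 * (5 * b ^ 2 + 10 * a * b + 14 * a ^ 2) ∧
      (16 / 5) * (a * b) ^ 4 / (b ^ 2 + t ^ 2) ^ 4 ≤
        (((a : ℂ) / (b + t * I)) + ((a : ℂ) / (b + t * I)) ^ 2
          + (4 / 5) * ((a : ℂ) / (b + t * I)) ^ 3
          + (2 / 5) * ((a : ℂ) / (b + t * I)) ^ 4).re := by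
  have hb : 0 < b := ha.trans_le hab
  have hQ : 0 < Q a b t := Q_pos ha hab t
  have hba : 0 ≤ b - a := sub_nonneg.mpr hab
  refine ⟨hQ, sub_nonneg.mp ?_⟩
  change 0 ≤ (P4 (a / (b + t * I))).re - _
  rw [P4_re_sub_eq a b t (by positivity)]
  positivity
end

section
/- Let f : [0,∞) → ℝ be continuous, nonnegative, and compactly supported, and let F(z) = ∫₀^∞ f(t) e^{−zt} dt be its Laplace transform. Suppose Re F(z) ≥ 0 for all complex z with Re z ≥ 0. Then for all real a, b ≥ 0 and all real y: if b ≥ a, then Re{F(−a+iy) − F(iy) − F(b−a+iy)} ≤ F(−a) − F(0); and if b ≤ a, then Re{F(−a+iy) − F(iy) − F(b−a+iy)} ≤ F(−a) − F(b−a). -/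
/-!
Write `z = x + iy`. Since `f ≥ 0`, the difference of the real parts of the Laplace transform at
`c + iy` and `d + iy` (with `c ≤ d`) is `∫ f(t) (e^{-ct} - e^{-dt}) cos(yt) dt`, which is at most its
value at `y = 0` because `cos ≤ 1` and the weight is nonnegative for `t > 0`. Applying this with
`(c, d) = (-a, 0)` resp. `(-a, b - a)` and discarding the third term, whose real part is
nonnegative by hypothesis because its argument lies in the closed right half-plane, gives the two
bounds.
-/

open MeasureTheory Complex Set

section Laplace

variable {f : ℝ → ℝ}

theorem integrableOn_ofReal_mul_cexp (hf_cont : Continuous f) (hf_supp : HasCompactSupport f)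
    (z : ℂ) (s : Set ℝ) : IntegrableOn (fun t : ℝ => (f t : ℂ) * cexp (-z * t)) s :=
  ((continuous_ofReal.comp hf_cont).mul (by fun_prop)).integrable_of_hasCompactSupport
    (hf_supp.comp_left ofReal_zero).mul_right |>.integrableOn

theorem integrableOn_mul_exp_mul_cos (hf_cont : Continuous f) (hf_supp : HasCompactSupport f)
    (x y : ℝ) (s : Set ℝ) :
    IntegrableOn (fun t => f t * Real.exp (-x * t) * Real.cos (y * t)) s :=
  (hf_cont.mul (by fun_prop)).mul (by fun_prop) |>.integrable_of_hasCompactSupport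
    hf_supp.mul_right.mul_right |>.integrableOn

theorem re_setIntegral_ofReal_mul_cexp {s : Set ℝ} (x y : ℝ)
    (hint : IntegrableOn (fun t : ℝ => (f t : ℂ) * cexp (-(x + y * I) * t)) s) :
    (∫ t in s, (f t : ℂ) * cexp (-(x + y * I) * t)).re =
      ∫ t in s, f t * Real.exp (-x * t) * Real.cos (y * t) := by
  rw [← RCLike.re_to_complex, ← integral_re hint]
  refine integral_congr_ae (ae_of_all _ fun t => ?_)
  have harg : -((x : ℂ) + y * I) * t = ((-x * t : ℝ) : ℂ) + ((-y * t : ℝ) : ℂ) * I := by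
    push_cast; ring
  simp only [RCLike.re_to_complex, harg, exp_ofReal_mul_I_re, ← ofReal_exp,
    exp_add, mul_re, ofReal_re, ofReal_im, zero_mul, sub_zero, neg_mul, Real.cos_neg]
  ring

theorem mul_exp_mul_cos_sub_le {u c d t : ℝ} (y : ℝ) (hu : 0 ≤ u) (hcd : c ≤ d) (ht : 0 ≤ t) :
    u * Real.exp (-c * t) * Real.cos (y * t) - u * Real.exp (-d * t) * Real.cos (y * t) ≤
      u * Real.exp (-c * t) - u * Real.exp (-d * t) := by
  have hexp : Real.exp (-d * t) ≤ Real.exp (-c * t) := Real.exp_le_exp.2 (by nlinarith)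
  have hweight : 0 ≤ u * (Real.exp (-c * t) - Real.exp (-d * t)) :=
    mul_nonneg hu (sub_nonneg.2 hexp)
  nlinarith [mul_nonneg hweight (sub_nonneg.2 (Real.cos_le_one (y * t)))]

theorem laplace_re_sub_le (hf_cont : Continuous f) (hf_nonneg : ∀ t, 0 ≤ f t)
    (hf_supp : HasCompactSupport f) {F : ℂ → ℂ}
    (hF : ∀ z : ℂ, F z = ∫ t in Ioi (0 : ℝ), (f t : ℂ) * cexp (-z * t))
    {c d : ℝ} (hcd : c ≤ d) (y : ℝ) :
    (F (c + y * I)).re - (F (d + y * I)).re ≤ (F c).re - (F d).re := by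
  have hre : ∀ x y : ℝ, (F (x + y * I)).re =
      ∫ t in Ioi (0 : ℝ), f t * Real.exp (-x * t) * Real.cos (y * t) := fun x y => by
    rw [hF, re_setIntegral_ofReal_mul_cexp x y (integrableOn_ofReal_mul_cexp hf_cont hf_supp _ _)]
  have hint := integrableOn_mul_exp_mul_cos hf_cont hf_supp (s := Ioi 0)
  have h0 : ∀ x : ℝ, F x = F (x + (0 : ℝ) * I) := fun x => by simp
  rw [h0 c, h0 d, hre, hre, hre, hre, ← integral_sub (hint c y) (hint d y),
    ← integral_sub (hint c 0) (hint d 0)]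
  refine setIntegral_mono_on ((hint c y).sub (hint d y)) ((hint c 0).sub (hint d 0))
    measurableSet_Ioi fun t ht => ?_
  simpa only [zero_mul, Real.cos_zero, mul_one] using
    mul_exp_mul_cos_sub_le y (hf_nonneg t) hcd (le_of_lt ht)

end Laplace

/-- Heath-Brown style repulsion lemma for the Laplace transform: if f is continuous,
nonnegative and compactly supported with Re F(z) ≥ 0 for Re z ≥ 0, then for a, b ≥ 0
and real y, Re{F(−a+iy) − F(iy) − F(b−a+iy)} is bounded by F(−a) − F(0) if b ≥ a,
and by F(−a) − F(b−a) if b ≤ a. -/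
theorem repel_lemma (f : ℝ → ℝ) (hf_cont : Continuous f)
    (hf_nonneg : ∀ t, 0 ≤ f t) (hf_supp : HasCompactSupport f)
    (F : ℂ → ℂ)
    (hF : ∀ z : ℂ, F z = ∫ t in Set.Ioi (0 : ℝ), (f t : ℂ) * Complex.exp (-z * t))
    (hFpos : ∀ z : ℂ, 0 ≤ z.re → 0 ≤ (F z).re)
    (a b y : ℝ) (ha : 0 ≤ a) (hb : 0 ≤ b) :
    (a ≤ b →
        (F (-(a : ℂ) + y * I) - F (y * I) - F ((b : ℂ) - a + y * I)).re ≤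
          (F (-(a : ℂ))).re - (F 0).re) ∧
      (b ≤ a →
        (F (-(a : ℂ) + y * I) - F (y * I) - F ((b : ℂ) - a + y * I)).re ≤
          (F (-(a : ℂ))).re - (F ((b : ℂ) - a)).re) := by
  constructor
  · intro hab
    have hshift := laplace_re_sub_le hf_cont hf_nonneg hf_supp hF (neg_nonpos.2 ha) y
    have hpos : 0 ≤ (F ((b : ℂ) - a + y * I)).re := hFpos _ (by simpa using hab)
    push_cast at hshift
    simp only [zero_add, sub_re] at hshift ⊢
    linarith
  · intro hab
    have hshift := laplace_re_sub_le hf_cont hf_nonneg hf_supp hF (show -a ≤ b - a by linarith) y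
    have hpos : 0 ≤ (F (y * I)).re := hFpos _ (by simp)
    push_cast at hshift
    simp only [sub_re]
    linarith
end

section
/- Let x₀ > 0 and let f : [0,∞) → ℝ be continuous with support contained in [0,x₀), twice differentiable on (0,x₀) with f'' continuous and bounded in absolute value by B. Then for every complex z with Re z > 0, F(z) := ∫₀^∞ f(t) e^{−zt} dt satisfies |F(z) − f(0)/z| ≤ (3Bx₀ + 2|f(0)|/x₀) / |z|². -/
/-!
Integrating by parts twice against `e^{-zt}` on `[0, x₀]`, where `f x₀ = 0`, gives
`F(z) - f(0)/z = (f'(0) - f'(x₀) e^{-z x₀} + ∫₀^{x₀} f'' e^{-zt}) / z²`, and `|e^{-zt}| ≤ 1`.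
The mean value theorem gives a point where `|f'| = |f(0)| / x₀`, so `|f'| ≤ B x₀ + |f(0)| / x₀`
on `(0, x₀)`; being Lipschitz there, `f'` extends continuously to the endpoints with the same bound.
-/

open MeasureTheory Complex Set Filter

section Laplace

variable {a b : ℝ} {z : ℂ}

lemma norm_mul_cexp_neg_mul_le (w : ℂ) (hz : 0 ≤ z.re) {t : ℝ} (ht : 0 ≤ t) :
    ‖w * cexp (-z * t)‖ ≤ ‖w‖ := by
  have hexp : ‖cexp (-z * t)‖ ≤ 1 := by
    rw [Complex.norm_exp, Real.exp_le_one_iff]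
    simpa using mul_nonneg hz ht
  simpa using mul_le_mul_of_nonneg_left hexp (norm_nonneg w)

lemma hasDerivAt_neg_cexp_neg_mul_div (hz : z ≠ 0) (t : ℝ) :
    HasDerivAt (fun s : ℝ => -cexp (-z * s) / z) (cexp (-z * t)) t := by
  have h : HasDerivAt (fun s : ℝ => cexp (-z * s)) (cexp (-z * t) * -z) t :=
    (((hasDerivAt_id (t : ℂ)).const_mul (-z)).cexp.comp_ofReal).congr_deriv (by simp)
  have hquot := h.neg.div_const z
  rwa [mul_neg, neg_neg, mul_div_cancel_right₀ _ hz] at hquot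

lemma integral_mul_cexp_neg_mul {u u' : ℝ → ℂ} (hab : a ≤ b) (hz : z ≠ 0)
    (hu : ContinuousOn u (Icc a b)) (hu' : ∀ t ∈ Ioo a b, HasDerivAt u (u' t) t)
    (hint : IntervalIntegrable u' volume a b) :
    ∫ t in a..b, u t * cexp (-z * t) =
      (u a * cexp (-z * a) - u b * cexp (-z * b) + ∫ t in a..b, u' t * cexp (-z * t)) / z := by
  have hE := hasDerivAt_neg_cexp_neg_mul_div hz
  rw [intervalIntegral.integral_mul_deriv_eq_deriv_mul_of_hasDerivAt
    (v := fun s : ℝ => -cexp (-z * s) / z) (by rwa [uIcc_of_le hab])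
    (fun t _ => (hE t).continuousAt.continuousWithinAt)
    (by simpa [hab] using hu') (fun t _ => hE t) hint
    ((by fun_prop : Continuous fun t : ℝ => cexp (-z * t)).intervalIntegrable a b)]
  simp_rw [mul_div_assoc', mul_neg, neg_div, intervalIntegral.integral_neg,
    intervalIntegral.integral_div]
  ring

lemma norm_intervalIntegral_mul_cexp_neg_mul_le {u : ℝ → ℂ} {C : ℝ} (hz : 0 ≤ z.re)
    (ha : 0 ≤ a) (hab : a ≤ b) (hC : ∀ t ∈ Ioo a b, ‖u t‖ ≤ C) :
    ‖∫ t in a..b, u t * cexp (-z * t)‖ ≤ C * (b - a) := by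
  rw [intervalIntegral.integral_of_le hab, Measure.restrict_congr_set Ioo_ae_eq_Ioc.symm,
    ← Real.volume_real_Ioo_of_le hab]
  exact norm_setIntegral_le_of_norm_le_const measure_Ioo_lt_top fun t ht =>
    (norm_mul_cexp_neg_mul_le _ hz (ha.trans ht.1.le)).trans (hC t ht)

lemma setIntegral_Ioi_eq_intervalIntegral {h : ℝ → ℂ} (hab : a ≤ b)
    (hzero : ∀ t, b < t → h t = 0) :
    ∫ t in Ioi a, h t = ∫ t in a..b, h t := by
  rw [intervalIntegral.integral_of_le hab]
  exact setIntegral_eq_of_subset_of_forall_sdiff_eq_zero measurableSet_Ioi Ioc_subset_Ioi_self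
    fun t ht => hzero t (not_le.mp fun htb => ht.2 ⟨ht.1, htb⟩)

lemma norm_intervalIntegral_mul_cexp_neg_mul_sub_le {u u' u'' : ℝ → ℂ} {M B : ℝ} (hz : 0 < z.re)
    (hb : 0 < b) (hu : ContinuousOn u (Icc 0 b)) (hu' : ContinuousOn u' (Icc 0 b))
    (hub : u b = 0) (hderiv : ∀ t ∈ Ioo 0 b, HasDerivAt u (u' t) t)
    (hderiv2 : ∀ t ∈ Ioo 0 b, HasDerivAt u' (u'' t) t)
    (hint : IntervalIntegrable u'' volume 0 b)
    (hM : ∀ t ∈ Icc 0 b, ‖u' t‖ ≤ M) (hB : ∀ t ∈ Ioo 0 b, ‖u'' t‖ ≤ B) :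
    ‖(∫ t in (0 : ℝ)..b, u t * cexp (-z * t)) - u 0 / z‖ ≤ (2 * M + B * b) / ‖z‖ ^ 2 := by
  have hz0 : z ≠ 0 := fun h => by simp [h] at hz
  have hboundary : ‖u' 0 - u' b * cexp (-z * b)‖ ≤ 2 * M := by
    linarith [norm_sub_le (u' 0) (u' b * cexp (-z * b)),
      norm_mul_cexp_neg_mul_le (u' b) hz.le hb.le, hM 0 (left_mem_Icc.mpr hb.le),
      hM b (right_mem_Icc.mpr hb.le)]
  have hrest : ‖∫ t in (0 : ℝ)..b, u'' t * cexp (-z * t)‖ ≤ B * b := by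
    simpa only [sub_zero] using norm_intervalIntegral_mul_cexp_neg_mul_le hz.le le_rfl hb.le hB
  rw [integral_mul_cexp_neg_mul hb.le hz0 hu hderiv (hu'.intervalIntegrable_of_Icc hb.le),
    integral_mul_cexp_neg_mul hb.le hz0 hu' hderiv2 hint]
  simp only [hub, ofReal_zero, zero_mul, sub_zero, mul_zero, Complex.exp_zero, mul_one,
    add_div _ _ z, add_sub_cancel_left, div_div, ← sq]
  rw [← add_div, norm_div, norm_pow]
  gcongr
  exact (norm_add_le _ _).trans (add_le_add hboundary hrest)

end Laplace

section Derivative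

variable {a b B M : ℝ} {f f' f'' : ℝ → ℝ}

/-- A derivative with `|f''| ≤ B` stays within `B (b - a)` of the slope `f' c` given by the mean
value theorem. -/
lemma abs_deriv_le_of_abs_deriv_deriv_le (hab : a < b) (hf : ContinuousOn f (Icc a b))
    (hf' : ∀ t ∈ Ioo a b, HasDerivAt f (f' t) t) (hf'' : ∀ t ∈ Ioo a b, HasDerivAt f' (f'' t) t)
    (hB : ∀ t ∈ Ioo a b, |f'' t| ≤ B) :
    ∀ t ∈ Ioo a b, |f' t| ≤ B * (b - a) + |f b - f a| / (b - a) := by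
  intro t ht
  obtain ⟨c, hc, hslope⟩ := exists_hasDerivAt_eq_slope f f' hab hf hf'
  have hlip : |f' t - f' c| ≤ B * |t - c| :=
    (convex_Ioo a b).norm_image_sub_le_of_norm_hasDerivWithin_le
      (fun s hs => (hf'' s hs).hasDerivWithinAt) hB hc ht
  have hdist : |t - c| ≤ b - a :=
    abs_sub_le_iff.mpr ⟨by linarith [ht.2, hc.1], by linarith [ht.1, hc.2]⟩
  have hBnn : 0 ≤ B := (abs_nonneg _).trans (hB t ht)
  have hfc : |f' c| = |f b - f a| / (b - a) := by
    rw [hslope, abs_div, abs_of_pos (sub_pos.mpr hab)]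
  linarith [abs_sub_abs_le_abs_sub (f' t) (f' c), mul_le_mul_of_nonneg_left hdist hBnn]

lemma exists_continuous_eqOn_of_abs_deriv_le (hf'' : ∀ t ∈ Ioo a b, HasDerivAt f' (f'' t) t)
    (hB : ∀ t ∈ Ioo a b, |f'' t| ≤ B) : ∃ g : ℝ → ℝ, Continuous g ∧ EqOn f' g (Ioo a b) := by
  have hlip : LipschitzOnWith B.toNNReal f' (Ioo a b) :=
    (convex_Ioo a b).lipschitzOnWith_of_nnnorm_hasDerivWithin_le
      (fun t ht => (hf'' t ht).hasDerivWithinAt)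
      fun t ht => by
        rw [← NNReal.coe_le_coe, coe_nnnorm, Real.norm_eq_abs]
        exact (hB t ht).trans (Real.le_coe_toNNReal B)
  obtain ⟨g, hg, hfg⟩ := hlip.extend_real
  exact ⟨g, hg.continuous, hfg⟩

lemma abs_le_on_Icc_of_abs_le_on_Ioo {g : ℝ → ℝ} (hab : a < b) (hg : Continuous g)
    (hM : ∀ t ∈ Ioo a b, |g t| ≤ M) : ∀ t ∈ Icc a b, |g t| ≤ M := by
  rw [← closure_Ioo hab.ne]
  exact closure_minimal hM (isClosed_le (continuous_abs.comp hg) continuous_const)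

lemma exists_continuous_eqOn_of_abs_deriv_deriv_le (hab : a < b) (hf : ContinuousOn f (Icc a b))
    (hf' : ∀ t ∈ Ioo a b, HasDerivAt f (f' t) t) (hf'' : ∀ t ∈ Ioo a b, HasDerivAt f' (f'' t) t)
    (hB : ∀ t ∈ Ioo a b, |f'' t| ≤ B) :
    ∃ g : ℝ → ℝ, Continuous g ∧ EqOn f' g (Ioo a b) ∧
      (∀ t ∈ Ioo a b, HasDerivAt g (f'' t) t) ∧
      ∀ t ∈ Icc a b, |g t| ≤ B * (b - a) + |f b - f a| / (b - a) := by
  obtain ⟨g, hg, hf'g⟩ := exists_continuous_eqOn_of_abs_deriv_le hf'' hB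
  refine ⟨g, hg, hf'g, fun t ht => ?_, abs_le_on_Icc_of_abs_le_on_Ioo hab hg fun t ht => ?_⟩
  · exact (hf'' t ht).congr_of_eventuallyEq
      (eventually_of_mem (isOpen_Ioo.mem_nhds ht) fun s hs => (hf'g hs).symm)
  · exact hf'g ht ▸ abs_deriv_le_of_abs_deriv_deriv_le hab hf hf' hf'' hB t ht

end Derivative

/-- If f is continuous, supported in [0,x₀), twice differentiable on (0,x₀) with |f''| ≤ B,
then for Re z > 0 the Laplace transform satisfies
|F(z) − f(0)/z| ≤ (3Bx₀ + 2|f(0)|/x₀)/|z|². -/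
theorem laplace_error_bound (x₀ B : ℝ) (hx₀ : 0 < x₀)
    (f f' f'' : ℝ → ℝ) (hf_cont : Continuous f)
    (hf_supp : ∀ t, x₀ ≤ t → f t = 0)
    (hderiv : ∀ t ∈ Set.Ioo 0 x₀, HasDerivAt f (f' t) t)
    (hderiv2 : ∀ t ∈ Set.Ioo 0 x₀, HasDerivAt f' (f'' t) t)
    (hf''_cont : ContinuousOn f'' (Set.Ioo 0 x₀))
    (hf''_bdd : ∀ t ∈ Set.Ioo 0 x₀, |f'' t| ≤ B)
    (z : ℂ) (hz : 0 < z.re) :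
    ‖(∫ t in Set.Ioi (0 : ℝ), (f t : ℂ) * Complex.exp (-z * t)) - (f 0 : ℂ) / z‖ ≤
      (3 * B * x₀ + 2 * |f 0| / x₀) / ‖z‖ ^ 2 := by
  have hfx₀ : f x₀ = 0 := hf_supp x₀ le_rfl
  obtain ⟨g, hg, hf'g, hg', hg_bdd⟩ :=
    exists_continuous_eqOn_of_abs_deriv_deriv_le hx₀ hf_cont.continuousOn hderiv hderiv2 hf''_bdd
  have hf''_int : IntervalIntegrable (fun t => (f'' t : ℂ)) volume 0 x₀ := by
    rw [intervalIntegrable_iff_integrableOn_Ioo_of_le hx₀.le]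
    exact IntegrableOn.of_bound measure_Ioo_lt_top
      ((continuous_ofReal.comp_continuousOn hf''_cont).aestronglyMeasurable measurableSet_Ioo) B
      (ae_restrict_of_forall_mem measurableSet_Ioo fun t ht => by simpa using hf''_bdd t ht)
  rw [setIntegral_Ioi_eq_intervalIntegral hx₀.le fun t ht => by simp [hf_supp t ht.le]]
  calc _ ≤ (2 * (B * x₀ + |f 0| / x₀) + B * x₀) / ‖z‖ ^ 2 :=
        norm_intervalIntegral_mul_cexp_neg_mul_sub_le hz hx₀
          (continuous_ofReal.comp hf_cont).continuousOn (continuous_ofReal.comp hg).continuousOn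
          (by simp [hfx₀]) (fun t ht => (hf'g ht ▸ hderiv t ht).ofReal_comp)
          (fun t ht => (hg' t ht).ofReal_comp) hf''_int
          (fun t ht => by simpa [hfx₀] using hg_bdd t ht) (fun t ht => by simpa using hf''_bdd t ht)
    _ = _ := by ring
end
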